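/- Let k and N be positive integers with N ≥ k+1. If G is a partial k-tree with at least 3N vertices, then there exist rooted partial k-trees G₁ and G₂ such that G is isomorphic to G₁ ⊕ G₂ and G₁ has at least N+1 and at most 2N vertices. -/

import Mathlib

open SimpleGraph

/-- `H` (a graph on `Fin n`) is a `k`-tree: there is a build order in which the first
`k+1` vertices form a clique and every later vertex has exactly `k` earlier neighbours,
which form a clique. -/
def IsKTree (k n : ℕ) (H : SimpleGraph (Fin n)) : Prop :=
  k + 1 ≤ n ∧
  (∀ i j : Fin n, i.val < k + 1 → j.val < k + 1 → i ≠ j → H.Adj i j) ∧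
  (∀ j : Fin n, k + 1 ≤ j.val →
    ∃ s : Finset (Fin n), s.card = k ∧ (∀ i ∈ s, i < j) ∧
      (∀ i : Fin n, i < j → (H.Adj i j ↔ i ∈ s)) ∧
      (∀ a ∈ s, ∀ b ∈ s, a ≠ b → H.Adj a b))

/-- `G` has tree-width at most `k`: it is a subgraph of some `k`-tree. -/
def TreewidthLE (k : ℕ) {V : Type} (G : SimpleGraph V) : Prop :=
  ∃ (n : ℕ) (H : SimpleGraph (Fin n)), IsKTree k n H ∧
    ∃ f : V ↪ Fin n, ∀ u v, G.Adj u v → H.Adj (f u) (f v)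

/-- `G`, with distinguished vertices `r 0, …, r k`, is a rooted partial `k`-tree:
`G` is a subgraph of a `k`-tree in which the distinguished vertices form a clique. -/
def IsRootedPartialKTree (k : ℕ) {V : Type} (G : SimpleGraph V) (r : Fin (k + 1) → V) : Prop :=
  ∃ (n : ℕ) (H : SimpleGraph (Fin n)), IsKTree k n H ∧
    ∃ f : V ↪ Fin n, (∀ u v, G.Adj u v → H.Adj (f u) (f v)) ∧
      ∀ i j : Fin (k + 1), i ≠ j → H.Adj (f (r i)) (f (r j))

/-- Adjacency in the disjoint union of two graphs. -/
def sumAdj {V₁ V₂ : Type} (G₁ : SimpleGraph V₁) (G₂ : SimpleGraph V₂) :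
    V₁ ⊕ V₂ → V₁ ⊕ V₂ → Prop
  | Sum.inl a, Sum.inl b => G₁.Adj a b
  | Sum.inr a, Sum.inr b => G₂.Adj a b
  | _, _ => False

lemma sumAdj_symm {V₁ V₂ : Type} (G₁ : SimpleGraph V₁) (G₂ : SimpleGraph V₂) :
    ∀ x y, sumAdj G₁ G₂ x y → sumAdj G₁ G₂ y x := by
  rintro (a | a) (b | b) h <;> simp only [sumAdj] at h ⊢ <;> exact h.symm

/-- Vertices of `G₁ ⊕ G₂`: the disjoint union with `r₁ i` identified with `r₂ i`. -/
def GlueVerts {V₁ V₂ : Type} {m : ℕ} (r₁ : Fin m → V₁) (r₂ : Fin m → V₂) : Type :=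
  Quot (fun x y : V₁ ⊕ V₂ => ∃ i, x = Sum.inl (r₁ i) ∧ y = Sum.inr (r₂ i))

/-- The graph `G₁ ⊕ G₂` obtained by identifying the roots of `G₁` and `G₂` pairwise. -/
def glue {V₁ V₂ : Type} {m : ℕ} (G₁ : SimpleGraph V₁) (G₂ : SimpleGraph V₂)
    (r₁ : Fin m → V₁) (r₂ : Fin m → V₂) : SimpleGraph (GlueVerts r₁ r₂) where
  Adj x y := x ≠ y ∧ ∃ a b, sumAdj G₁ G₂ a b ∧ Quot.mk _ a = x ∧ Quot.mk _ b = y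
  symm := ⟨by
    rintro x y ⟨hxy, a, b, hab, ha, hb⟩
    exact ⟨hxy.symm, b, a, sumAdj_symm G₁ G₂ a b hab, hb, ha⟩⟩
  loopless := ⟨fun x h => h.1 rfl⟩

/-- The roots of the glued graph `G₁ ⊕ G₂`. -/
def glueRoot {V₁ V₂ : Type} {m : ℕ} (r₁ : Fin m → V₁) (r₂ : Fin m → V₂) (i : Fin m) :
    GlueVerts r₁ r₂ :=
  Quot.mk _ (Sum.inl (r₁ i))

/-- `c` is a `(p,q)`-coloring of `G`: colors lie in `{0, …, p-1}` and the colors of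
adjacent vertices `u`, `v` satisfy `q ≤ |c u - c v| ≤ p - q`. -/
def IsPQColoring {V : Type} (G : SimpleGraph V) (p q : ℕ) (c : V → ℕ) : Prop :=
  (∀ v, c v < p) ∧ ∀ u v, G.Adj u v →
    (q : ℤ) ≤ |(c u : ℤ) - (c v : ℤ)| ∧ |(c u : ℤ) - (c v : ℤ)| ≤ (p : ℤ) - q

def HasPQColoring {V : Type} (G : SimpleGraph V) (p q : ℕ) : Prop :=
  ∃ c : V → ℕ, IsPQColoring G p q c

/-- The circular chromatic number of `G`: the infimum of the ratios `p/q` such that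
`G` has a `(p,q)`-coloring. -/
noncomputable def circChromNum {V : Type} (G : SimpleGraph V) : ℝ :=
  sInf {r : ℝ | ∃ p q : ℕ, 0 < q ∧ HasPQColoring G p q ∧ r = (p : ℝ) / (q : ℝ)}

/-- The type of a rooted graph: the matrix of distances between the roots. -/
noncomputable def typeOf {V : Type} {m : ℕ} (G : SimpleGraph V) (r : Fin m → V) :
    Fin m → Fin m → ℕ∞ :=
  fun i j => G.edist (r i) (r j)

/-- An abstract type: a symmetric matrix with entries in `ℕ∞`, zeroes exactly on the
diagonal, satisfying the triangle inequality. -/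
def IsType {m : ℕ} (M : Fin m → Fin m → ℕ∞) : Prop :=
  (∀ i j, M i j = M j i) ∧ (∀ i j, M i j = 0 ↔ i = j) ∧
    (∀ i j l, M i l ≤ M i j + M j l)

/-- A bipartite type: `M i j + M j l + M i l` is even whenever all three entries are finite. -/
def IsBipartiteType {m : ℕ} (M : Fin m → Fin m → ℕ∞) : Prop :=
  IsType M ∧ ∀ i j l, ∀ a b c : ℕ, M i j = a → M j l = b → M i l = c → Even (a + b + c)

/-- Two types are compatible if corresponding entries have the same parity whenever
both are finite. -/
def CompatibleTypes {m : ℕ} (M M' : Fin m → Fin m → ℕ∞) : Prop :=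
  ∀ i j, ∀ a b : ℕ, M i j = a → M' i j = b → (Even a ↔ Even b)

/-- `M ⪯ M'`: the types are compatible and `M i j ≤ M' i j` entrywise. -/
def TypeLE {m : ℕ} (M M' : Fin m → Fin m → ℕ∞) : Prop :=
  CompatibleTypes M M' ∧ ∀ i j, M i j ≤ M' i j

/-- A `p`-precoloring `c` of the roots extends to a `(p,q)`-coloring of `G`. -/
def PrecoloringExtends {V : Type} {m : ℕ} (G : SimpleGraph V) (r : Fin m → V)
    (p q : ℕ) (c : Fin m → ℕ) : Prop :=
  ∃ f : V → ℕ, IsPQColoring G p q f ∧ ∀ i, f (r i) = c i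


/-!
A partial `k`-tree on at least `k + 1` vertices is a spanning subgraph of a `k`-tree `H` on the
same vertices: surplus vertices of a `k`-tree can be deleted one at a time, re-attaching the last
vertex of the construction order to a `k`-clique that contains the rest of its lower neighbourhood.

Along the construction order, `H` has a tree decomposition with bags the `(k+1)`-cliques
`{j} ∪ N⁻(j)` (the root bag being `{0, …, k}`), the parent of node `j` being the highest vertex of
`N⁻(j)`, or the root. Take a node `J` with the smallest subtree among those with more than
`M = N - k` vertices: its child subtrees have at most `M` vertices each and at least `M` in
total, so some of them cover between `M` and `2M - 1` vertices. Their union `A` is separated from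
the other vertices by the bag `K` of `J`, and `G` is the glue of `G[A ∪ K]` and `G[V \ A]`
along `K`.
-/

open Finset Relation

theorem Finset.exists_subset_le_sum_lt_two_mul {ι : Type*} [DecidableEq ι] {f : ι → ℕ} {M : ℕ}
    (hM : 0 < M) {s : Finset ι} (hf : ∀ i ∈ s, f i ≤ M) (hs : M ≤ ∑ i ∈ s, f i) :
    ∃ t ⊆ s, M ≤ ∑ i ∈ t, f i ∧ ∑ i ∈ t, f i < 2 * M := by
  induction s using Finset.induction_on with
  | empty => simp at hs; omega
  | insert a s ha ih =>
    rw [sum_insert ha] at hs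
    by_cases hsum : M ≤ ∑ i ∈ s, f i
    · obtain ⟨t, hts, ht⟩ := ih (fun i hi => hf i (mem_insert_of_mem hi)) hsum
      exact ⟨t, hts.trans (subset_insert a s), ht⟩
    · have := hf a (mem_insert_self a s)
      exact ⟨insert a s, Subset.rfl, by rw [sum_insert ha]; omega⟩

namespace Forest

variable {α : Type*} [LinearOrder α] (p : α → α)

/-- `p` encodes a forest on `α`: `x` is a root if `x ≤ p x`, and has parent `p x` otherwise. -/
def Step (x y : α) : Prop := p x = y ∧ y < x

variable {p}

theorem step_rightUnique : Relator.RightUnique (Step p) :=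
  fun _ _ _ h₁ h₂ => h₁.1.symm.trans h₂.1

theorem le_of_reflTransGen {x a : α} (h : ReflTransGen (Step p) x a) : a ≤ x := by
  induction h with
  | refl => exact le_rfl
  | tail _ hstep ih => exact hstep.2.le.trans ih

variable (p) [Fintype α]

open Classical in
noncomputable def subtree (a : α) : Finset α := {x | ReflTransGen (Step p) x a}

open Classical in
noncomputable def children (a : α) : Finset α := {c | Step p c a}

variable {p}

@[simp] theorem mem_subtree {a x : α} : x ∈ subtree p a ↔ ReflTransGen (Step p) x a := by
  simp [subtree]

@[simp] theorem mem_children {a c : α} : c ∈ children p a ↔ Step p c a := by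
  simp [children]

theorem eq_of_reflTransGen_of_mem_children {a c c' : α} (hc : c ∈ children p a)
    (hc' : c' ∈ children p a) (h : ReflTransGen (Step p) c c') : c = c' := by
  rcases h.cases_head with h | ⟨d, hd, hdc'⟩
  · exact h
  · have had : a = d := (mem_children.1 hc).1.symm.trans hd.1
    exact absurd ((mem_children.1 hc').2.trans_le (had ▸ le_of_reflTransGen hdc')) (lt_irrefl _)

theorem pairwiseDisjoint_subtree_children (a : α) :
    (children p a : Set α).PairwiseDisjoint (subtree p) := by
  intro c hc c' hc' hne
  refine disjoint_left.2 fun x hxc hxc' => hne ?_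
  rcases (mem_subtree.1 hxc).total_of_right_unique step_rightUnique (mem_subtree.1 hxc') with h | h
  · exact eq_of_reflTransGen_of_mem_children hc hc' h
  · exact (eq_of_reflTransGen_of_mem_children hc' hc h).symm

theorem subtree_eq_insert_biUnion [DecidableEq α] (a : α) :
    subtree p a = insert a ((children p a).biUnion (subtree p)) := by
  ext x
  simp only [mem_subtree, mem_insert, mem_biUnion, mem_children,
    ReflTransGen.cases_tail_iff (Step p) x a]
  exact or_congr eq_comm ⟨fun ⟨c, hxc, hc⟩ => ⟨c, hc, hxc⟩, fun ⟨c, hc, hxc⟩ => ⟨c, hxc, hc⟩⟩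

theorem card_subtree [DecidableEq α] (a : α) :
    #(subtree p a) = ∑ c ∈ children p a, #(subtree p c) + 1 := by
  have ha : a ∉ (children p a).biUnion (subtree p) := by
    simp only [mem_biUnion, mem_children, mem_subtree, not_exists, not_and]
    exact fun c hc hac => (hc.2.trans_le (le_of_reflTransGen hac)).false
  rw [subtree_eq_insert_biUnion a, card_insert_of_notMem ha,
    card_biUnion (pairwiseDisjoint_subtree_children a)]

theorem card_subtree_lt_of_mem_children {a c : α} (hc : c ∈ children p a) :
    #(subtree p c) < #(subtree p a) := by
  classical
  rw [card_subtree a]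
  exact Nat.lt_succ_of_le
    (single_le_sum (f := fun c => #(subtree p c)) (fun _ _ => Nat.zero_le _) hc)

/-- Take `a` with the smallest subtree of more than `M` nodes: its children have subtrees of at
most `M` nodes, and at least `M` in total. -/
theorem exists_children_balanced {M : ℕ} (hM : 0 < M) {a₀ : α} (h : M < #(subtree p a₀)) :
    ∃ a, ∃ t ⊆ children p a,
      M ≤ #(t.biUnion (subtree p)) ∧ #(t.biUnion (subtree p)) < 2 * M := by
  classical
  obtain ⟨a, ha, hmin⟩ := exists_min_image {a | M < #(subtree p a)} (fun a => #(subtree p a))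
    ⟨a₀, by simpa using h⟩
  simp only [mem_filter, mem_univ, true_and] at ha hmin
  have hsmall : ∀ c ∈ children p a, #(subtree p c) ≤ M := fun c hc => by
    by_contra! hc'
    exact (card_subtree_lt_of_mem_children hc).not_ge (hmin c hc')
  obtain ⟨t, hts, ht⟩ := exists_subset_le_sum_lt_two_mul hM hsmall
    (by have := card_subtree (p := p) a; omega)
  refine ⟨a, t, hts, ?_⟩
  rwa [card_biUnion ((pairwiseDisjoint_subtree_children a).subset (by simpa using hts))]

end Forest

namespace SimpleGraph

section LowerNbrs

variable {m : ℕ}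

open Classical in
noncomputable def lowerNbrs (H : SimpleGraph (Fin m)) (j : Fin m) : Finset (Fin m) :=
  {i | i < j ∧ H.Adj i j}

@[simp] theorem mem_lowerNbrs {H : SimpleGraph (Fin m)} {i j : Fin m} :
    i ∈ H.lowerNbrs j ↔ i < j ∧ H.Adj i j := by
  simp [lowerNbrs]

theorem lowerNbrs_castSucc (H : SimpleGraph (Fin (m + 1))) (j : Fin m) :
    H.lowerNbrs j.castSucc = ((H.comap Fin.castSucc).lowerNbrs j).map Fin.castSuccEmb := by
  ext i
  cases i using Fin.lastCases with
  | last => simp [(Fin.castSucc_lt_last j).not_gt]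
  | cast i => simp

theorem isNClique_comap_iff {α β : Type*} {G : SimpleGraph β} (e : α ↪ β) {n : ℕ}
    {s : Finset α} : (G.comap e).IsNClique n s ↔ G.IsNClique n (s.map e) := by
  simp only [isNClique_iff, card_map, coe_map, IsClique, e.injective.injOn.pairwise_image]
  rfl

def extendLast {q : ℕ} (H : SimpleGraph (Fin q)) (t : Finset (Fin q)) :
    SimpleGraph (Fin (q + 1)) where
  Adj a b := Fin.lastCases (Fin.lastCases False (· ∈ t) b)
    (fun x => Fin.lastCases (x ∈ t) (H.Adj x) b) a
  symm := ⟨fun a b => by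
    cases a using Fin.lastCases <;> cases b using Fin.lastCases <;> simp [H.adj_comm]⟩
  loopless := ⟨fun a => by cases a using Fin.lastCases <;> simp⟩

variable {q : ℕ} (H : SimpleGraph (Fin q)) (t : Finset (Fin q))

@[simp] theorem extendLast_adj_castSucc (x y : Fin q) :
    (H.extendLast t).Adj x.castSucc y.castSucc ↔ H.Adj x y := by
  simp [extendLast]

@[simp] theorem extendLast_adj_castSucc_last (x : Fin q) :
    (H.extendLast t).Adj x.castSucc (Fin.last q) ↔ x ∈ t := by
  simp [extendLast]

theorem comap_castSucc_extendLast : (H.extendLast t).comap Fin.castSucc = H := by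
  ext; simp

theorem lowerNbrs_extendLast_last :
    (H.extendLast t).lowerNbrs (Fin.last q) = t.map Fin.castSuccEmb := by
  ext i
  cases i using Fin.lastCases with
  | last => simp
  | cast i => simp [Fin.castSucc_lt_last]

end LowerNbrs

end SimpleGraph

open SimpleGraph

section KTree

variable {k m : ℕ} {H : SimpleGraph (Fin m)}

theorem isKTree_iff : IsKTree k m H ↔ k + 1 ≤ m ∧
    (∀ i j : Fin m, i.val < k + 1 → j.val < k + 1 → i ≠ j → H.Adj i j) ∧
    ∀ j : Fin m, k + 1 ≤ j.val → H.IsNClique k (H.lowerNbrs j) := by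
  refine and_congr_right fun _ => and_congr_right fun _ => forall₂_congr fun j hj => ?_
  constructor
  · rintro ⟨s, hcard, hlt, hadj, hcl⟩
    have : H.lowerNbrs j = s := by
      ext i
      simp only [mem_lowerNbrs]
      exact ⟨fun ⟨hi, ha⟩ => (hadj i hi).1 ha, fun hi => ⟨hlt i hi, (hadj i (hlt i hi)).2 hi⟩⟩
    exact this ▸ ⟨fun a ha b hb => hcl a ha b hb, hcard⟩
  · intro h
    refine ⟨H.lowerNbrs j, h.card_eq, fun i hi => (mem_lowerNbrs.1 hi).1,
      fun i hi => by simp [hi], fun a ha b hb => h.isClique ha hb⟩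

theorem isKTree_succ_iff {q : ℕ} {H : SimpleGraph (Fin (q + 1))} (hq : k + 1 ≤ q) :
    IsKTree k (q + 1) H ↔
      IsKTree k q (H.comap Fin.castSucc) ∧ H.IsNClique k (H.lowerNbrs (Fin.last q)) := by
  have hlow (j : Fin q) : H.IsNClique k (H.lowerNbrs j.castSucc) ↔
      (H.comap Fin.castSucc).IsNClique k ((H.comap Fin.castSucc).lowerNbrs j) := by
    rw [lowerNbrs_castSucc, ← isNClique_comap_iff]; rfl
  rw [isKTree_iff, isKTree_iff]
  constructor
  · rintro ⟨-, hbase, hlower⟩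
    exact ⟨⟨hq, fun i j hi hj hij => hbase _ _ hi hj (Fin.castSucc_injective _ |>.ne hij),
      fun j hj => (hlow j).1 (hlower _ hj)⟩, hlower _ (by simp; omega)⟩
  · rintro ⟨⟨-, hbase, hlower⟩, hlast⟩
    refine ⟨by omega, fun i j hi hj hij => ?_, fun j hj => ?_⟩
    · cases i using Fin.lastCases with
      | last => simp at hi; omega
      | cast i =>
        cases j using Fin.lastCases with
        | last => simp at hj; omega
        | cast j => exact hbase i j hi hj (ne_of_apply_ne _ hij)
    · cases j using Fin.lastCases with
      | last => exact hlast
      | cast j => exact (hlow j).2 (hlower j hj)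

theorem isKTree_top (h : m = k + 1) : IsKTree k m ⊤ :=
  ⟨h.ge, fun _ _ _ _ hij => hij, fun j hj => by omega⟩

theorem IsKTree.isNClique_lowerNbrs (hH : IsKTree k m H) {j : Fin m} (hj : k ≤ j.val) :
    H.IsNClique k (H.lowerNbrs j) := by
  rcases hj.lt_or_eq with hj | hj
  · exact (isKTree_iff.1 hH).2.2 j hj
  have hbase (a b : Fin m) (ha : a < j) (hb : b ≤ j) (hab : a ≠ b) : H.Adj a b :=
    hH.2.1 a b (by omega) (by omega) hab
  have : H.lowerNbrs j = Iio j := by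
    ext i
    simpa using fun hi => hbase i j hi le_rfl hi.ne
  rw [this]
  exact ⟨fun a ha b hb => hbase a b (mem_Iio.1 ha) (mem_Iio.1 hb).le, by simp [hj]⟩

end KTree

namespace SimpleGraph

variable {m : ℕ}

/-- For `r ≤ j`, with `r` the vertex `k` of a `k`-tree, these are the bags of a tree decomposition
indexed by the vertices `j ≥ r`, in which node `j` has parent `H.parent r j`. -/
noncomputable def bag (H : SimpleGraph (Fin m)) (j : Fin m) : Finset (Fin m) :=
  insert j (H.lowerNbrs j)

noncomputable def parent (H : SimpleGraph (Fin m)) (r j : Fin m) : Fin m :=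
  (insert r (H.lowerNbrs j)).max' (insert_nonempty _ _)

variable {H : SimpleGraph (Fin m)} {r i j : Fin m}

theorem le_of_mem_bag (h : i ∈ H.bag j) : i ≤ j := by
  rcases mem_insert.1 h with rfl | h
  exacts [le_rfl, (mem_lowerNbrs.1 h).1.le]

theorem root_le_parent : r ≤ H.parent r j :=
  le_max' _ _ (mem_insert_self _ _)

theorem parent_lt (hj : r < j) : H.parent r j < j :=
  (max'_lt_iff _ _).2 fun _ hi => (mem_insert.1 hi).elim (· ▸ hj) fun hi => (mem_lowerNbrs.1 hi).1

theorem root_lt_of_step {x y : Fin m} (h : Forest.Step (H.parent r) x y) : r < x :=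
  (h.1 ▸ root_le_parent).trans_lt h.2

theorem reflTransGen_step_root {x : Fin m} (hx : r ≤ x) :
    ReflTransGen (Forest.Step (H.parent r)) x r := by
  induction x using WellFoundedLT.induction with
  | _ x ih =>
  rcases hx.lt_or_eq with hx | rfl
  · exact .head ⟨rfl, parent_lt hx⟩ (ih _ (parent_lt hx) root_le_parent)
  · exact .refl

end SimpleGraph

section TreeDecomposition

variable {k m : ℕ} {H : SimpleGraph (Fin m)} {r : Fin m}

theorem IsKTree.isNClique_bag (hH : IsKTree k m H) (hr : r.val = k) {j : Fin m} (hj : r ≤ j) :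
    H.IsNClique (k + 1) (H.bag j) :=
  (hH.isNClique_lowerNbrs (hr ▸ hj)).insert fun _ hb => (mem_lowerNbrs.1 hb).2.symm

/-- A clique lies in the bag of its highest vertex, or in the root bag. -/
theorem IsKTree.subset_bag_max' (hH : IsKTree k m H) (hr : r.val = k) {C : Finset (Fin m)}
    (hC : H.IsClique (C : Set (Fin m))) : C ⊆ H.bag ((insert r C).max' (insert_nonempty _ _)) := by
  intro i hi
  have hij : i ≤ (insert r C).max' (insert_nonempty _ _) := le_max' _ _ (mem_insert_of_mem hi)
  have hj := max'_mem (insert r C) (insert_nonempty _ _)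
  generalize (insert r C).max' _ = j at hij hj ⊢
  rcases hij.lt_or_eq with hij | rfl
  · refine mem_insert_of_mem (mem_lowerNbrs.2 ⟨hij, ?_⟩)
    rcases mem_insert.1 hj with hjr | hjC
    · exact hH.2.1 i j (by rw [hjr] at hij; omega) (by omega) hij.ne
    · exact hC hi hjC hij.ne
  · exact mem_insert_self _ _

theorem IsKTree.exists_isNClique_superset (hH : IsKTree k m H) {C : Finset (Fin m)}
    (hC : H.IsClique (C : Set (Fin m))) (hCk : #C ≤ k) : ∃ t, C ⊆ t ∧ H.IsNClique k t := by
  have hD := hH.isNClique_bag (r := ⟨k, hH.1⟩) rfl (le_max' _ _ (mem_insert_self _ C))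
  obtain ⟨t, hCt, htD, ht⟩ :=
    exists_subsuperset_card_eq (hH.subset_bag_max' rfl hC) hCk (by rw [hD.card_eq]; omega)
  exact ⟨t, hCt, hD.isClique.subset (by simpa using htD), ht⟩

theorem IsKTree.mem_bag_parent (hH : IsKTree k m H) (hr : r.val = k) {j y : Fin m} (hj : r ≤ j)
    (hy : y ∈ H.bag j) : y = j ∨ y ∈ H.bag (H.parent r j) :=
  (mem_insert.1 hy).imp_right fun hy =>
    hH.subset_bag_max' hr (hH.isNClique_lowerNbrs (hr ▸ hj)).isClique hy

theorem IsKTree.reflTransGen_of_mem_bag (hH : IsKTree k m H) (hr : r.val = k) {x w : Fin m}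
    (hx : r < x) (h : x ∈ H.bag w) : ReflTransGen (Forest.Step (H.parent r)) w x := by
  induction w using WellFoundedLT.induction with
  | _ w ih =>
  have hw : r < w := hx.trans_le (le_of_mem_bag h)
  rcases hH.mem_bag_parent hr hw.le h with rfl | h
  · exact .refl
  · exact .head ⟨rfl, parent_lt hw⟩ (ih _ (parent_lt hw) h)

/-- `y` stays in every bag on the path from `w` up to the parent of `a`. -/
theorem IsKTree.mem_bag_parent_of_not_reflTransGen (hH : IsKTree k m H) (hr : r.val = k)
    {a w y : Fin m} (ha : r < a) (hwa : ReflTransGen (Forest.Step (H.parent r)) w a)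
    (hy : y ∈ H.bag w) (hya : ¬ ReflTransGen (Forest.Step (H.parent r)) y a) :
    y ∈ H.bag (H.parent r a) := by
  induction hwa using ReflTransGen.head_induction_on with
  | refl => exact (hH.mem_bag_parent hr ha.le hy).resolve_left fun h => hya (h ▸ .refl)
  | head hstep hwa ih =>
    rcases hH.mem_bag_parent hr (root_lt_of_step hstep).le hy with rfl | hy
    · exact (hya (.head hstep hwa)).elim
    · exact ih (hstep.1 ▸ hy)

theorem IsKTree.exists_separator (hH : IsKTree k m H) {M : ℕ} (hM : 0 < M) (hm : k + M < m) :
    ∃ A K : Finset (Fin m), H.IsNClique (k + 1) K ∧ Disjoint A K ∧ M ≤ #A ∧ #A < 2 * M ∧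
      ∀ x y, H.Adj x y → x ∈ A → y ∉ A → y ∈ K := by
  set r : Fin m := ⟨k, by omega⟩
  have hr : r.val = k := rfl
  have hroot : M < #(Forest.subtree (H.parent r) r) :=
    calc M < #(Ici r) := by rw [Fin.card_Ici]; omega
      _ ≤ _ := card_le_card fun x hx =>
        Forest.mem_subtree.2 (reflTransGen_step_root (mem_Ici.1 hx))
  obtain ⟨J, t, ht, hA₁, hA₂⟩ := Forest.exists_children_balanced hM hroot
  set A := t.biUnion (Forest.subtree (H.parent r))
  obtain ⟨c₀, hc₀⟩ : t.Nonempty := nonempty_iff_ne_empty.2 fun h => by simp [A, h] at hA₁; omega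
  have hJ : r ≤ J := (Forest.mem_children.1 (ht hc₀)).1 ▸ root_le_parent
  have hA : ∀ x ∈ A, ∃ c ∈ t, ReflTransGen (Forest.Step (H.parent r)) x c := by
    simp [A]
  refine ⟨A, H.bag J, hH.isNClique_bag hr hJ, disjoint_left.2 fun x hx hxJ => ?_, hA₁, hA₂,
    fun x y hxy hx hy => ?_⟩
  · obtain ⟨c, hct, hxc⟩ := hA x hx
    exact ((Forest.mem_children.1 (ht hct)).2.trans_le (Forest.le_of_reflTransGen hxc)).not_ge
      (le_of_mem_bag hxJ)
  obtain ⟨c, hct, hxc⟩ := hA x hx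
  have hcJ := Forest.mem_children.1 (ht hct)
  have hrc : r < c := root_lt_of_step hcJ
  have hyc : ¬ ReflTransGen (Forest.Step (H.parent r)) y c := fun h =>
    hy (mem_biUnion.2 ⟨c, hct, Forest.mem_subtree.2 h⟩)
  rcases hxy.ne.lt_or_gt with hlt | hlt
  · -- `x ∈ H.bag y` would put `y` below `x`, hence below `c`
    exact (hyc ((hH.reflTransGen_of_mem_bag hr (hrc.trans_le (Forest.le_of_reflTransGen hxc))
      (mem_insert_of_mem (mem_lowerNbrs.2 ⟨hlt, hxy⟩))).trans hxc)).elim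
  · exact hcJ.1 ▸ hH.mem_bag_parent_of_not_reflTransGen hr hrc hxc
      (mem_insert_of_mem (mem_lowerNbrs.2 ⟨hlt, hxy.symm⟩)) hyc

end TreeDecomposition

/-- Unlike in `TreewidthLE`, the `k`-tree has no vertices outside `G`. -/
def IsSpanningPartialKTree (k : ℕ) {V : Type*} (G : SimpleGraph V) : Prop :=
  ∃ (m : ℕ) (H : SimpleGraph (Fin m)), IsKTree k m H ∧
    ∃ e : V ≃ Fin m, ∀ u v, G.Adj u v → H.Adj (e u) (e v)

namespace Equiv

variable {V : Type*} [DecidableEq V] {v₀ : V} {m : ℕ}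

def extendLast (e : ({v₀}ᶜ : Set V) ≃ Fin m) : V ≃ Fin (m + 1) :=
  (optionSubtypeNe v₀).symm.trans (e.optionCongr.trans finSuccEquivLast.symm)

theorem extendLast_self (e : ({v₀}ᶜ : Set V) ≃ Fin m) : e.extendLast v₀ = Fin.last m := by
  change finSuccEquivLast.symm (e.optionCongr ((optionSubtypeNe v₀).symm v₀)) = _
  rw [optionSubtypeNe_symm_self]; rfl

theorem extendLast_of_ne (e : ({v₀}ᶜ : Set V) ≃ Fin m) {v : V} (hv : v ≠ v₀) :
    e.extendLast v = (e ⟨v, hv⟩).castSucc := by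
  change finSuccEquivLast.symm (e.optionCongr ((optionSubtypeNe v₀).symm v)) = _
  rw [optionSubtypeNe_symm_of_ne hv]
  exact finSuccEquivLast_symm_some _

end Equiv

namespace IsSpanningPartialKTree

variable {k : ℕ} {V : Type*} {G G' : SimpleGraph V}

theorem anti (h : G ≤ G') (hG' : IsSpanningPartialKTree k G') : IsSpanningPartialKTree k G :=
  let ⟨m, H, hH, e, he⟩ := hG'
  ⟨m, H, hH, e, fun u v huv => he u v (h huv)⟩

theorem of_card_eq [Fintype V] (hV : Fintype.card V = k + 1) : IsSpanningPartialKTree k G :=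
  ⟨k + 1, ⊤, isKTree_top rfl, Fintype.equivFinOfCardEq hV, fun _ _ huv => by simpa using huv.ne⟩

theorem of_induce_compl_singleton [Fintype V] {v₀ : V}
    (h : IsSpanningPartialKTree k (G.induce {v₀}ᶜ))
    (hclique : G.IsClique (G.neighborSet v₀)) (hdeg : (G.neighborSet v₀).ncard ≤ k) :
    IsSpanningPartialKTree k G := by
  classical
  obtain ⟨m, H, hH, e, he⟩ := h
  set C : Finset (Fin m) := ({v | G.Adj v₀ v} : Finset ({v₀}ᶜ : Set V)).map e.toEmbedding
  have hC : H.IsClique (C : Set (Fin m)) := by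
    simp only [C, coe_map, coe_filter, mem_univ, true_and, Equiv.coe_toEmbedding]
    rintro _ ⟨a, ha, rfl⟩ _ ⟨b, hb, rfl⟩ hab
    exact he a b (hclique ha hb (fun h => hab (by rw [Subtype.ext h])))
  have hCk : #C ≤ k := by
    refine le_trans ?_ hdeg
    rw [card_map, ← card_map (Function.Embedding.subtype _), ← Set.ncard_coe_finset]
    exact Set.ncard_le_ncard (by intro v; simp +contextual) (Set.toFinite _)
  obtain ⟨t, hCt, ht⟩ := hH.exists_isNClique_superset hC hCk
  have hmemt (v : V) (hv : v ≠ v₀) (h : G.Adj v₀ v) : e ⟨v, hv⟩ ∈ t :=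
    hCt (mem_map_of_mem _ (by simpa using h))
  refine ⟨m + 1, H.extendLast t, (isKTree_succ_iff hH.1).2 ⟨?_, ?_⟩, e.extendLast,
    fun u v huv => ?_⟩
  · rwa [comap_castSucc_extendLast]
  · rw [lowerNbrs_extendLast_last, ← isNClique_comap_iff]
    rwa [Fin.coe_castSuccEmb, comap_castSucc_extendLast]
  rcases eq_or_ne u v₀ with rfl | hu
  · rw [e.extendLast_self, e.extendLast_of_ne huv.ne.symm, adj_comm, extendLast_adj_castSucc_last]
    exact hmemt v _ huv
  rcases eq_or_ne v v₀ with rfl | hv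
  · rw [e.extendLast_self, e.extendLast_of_ne hu, extendLast_adj_castSucc_last]
    exact hmemt u hu huv.symm
  · rw [e.extendLast_of_ne hu, e.extendLast_of_ne hv, extendLast_adj_castSucc]
    exact he ⟨u, hu⟩ ⟨v, hv⟩ huv

end IsSpanningPartialKTree

theorem Function.Embedding.exists_castSucc_eq {V : Type*} {n : ℕ} (f : V ↪ Fin (n + 1))
    (hf : ∀ v, f v ≠ Fin.last n) : ∃ f₀ : V ↪ Fin n, ∀ v, (f₀ v).castSucc = f v :=
  ⟨⟨fun v => (f v).castPred (hf v), fun a b h => f.injective (by simpa using h)⟩,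
    fun v => Fin.castSucc_castPred _ (hf v)⟩

theorem IsKTree.isSpanningPartialKTree_comap {k n : ℕ} {H : SimpleGraph (Fin n)}
    (hH : IsKTree k n H) {V : Type*} [Fintype V] (f : V ↪ Fin n)
    (hV : k + 1 ≤ Fintype.card V) : IsSpanningPartialKTree k (H.comap f) := by
  classical
  induction n generalizing V with
  | zero => have := Fintype.card_le_of_embedding f; simp at this; omega
  | succ n ih =>
  rcases hV.eq_or_lt with hV | hV
  · exact .of_card_eq hV.symm
  have hn : k + 1 ≤ n := by have := Fintype.card_le_of_embedding f; simp at this; omega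
  obtain ⟨hH₀, hlast⟩ := (isKTree_succ_iff hn).1 hH
  by_cases hf : ∃ v₀, f v₀ = Fin.last n
  · obtain ⟨v₀, hv₀⟩ := hf
    obtain ⟨f₀, hf₀⟩ :=
      ((Function.Embedding.subtype (· ∈ ({v₀}ᶜ : Set V))).trans f).exists_castSucc_eq
        fun v h => v.2 (f.injective (h.trans hv₀.symm))
    have hnbr : (H.comap f).neighborSet v₀ = f ⁻¹' H.lowerNbrs (Fin.last n) := by
      ext v; simp [hv₀, Fin.lt_last_iff_ne_last, eq_comm, adj_comm]
      exact fun h => h.ne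
    refine .of_induce_compl_singleton (.anti (fun u v huv => ?_) (ih hH₀ f₀ ?_)) ?_ ?_
    · simpa [hf₀] using huv
    · rw [Fintype.card_compl_set, Set.card_singleton]; omega
    · rw [hnbr]
      exact fun u hu v hv huv => hlast.isClique hu hv (f.injective.ne huv)
    · rw [hnbr, ← hlast.card_eq, ← Set.ncard_coe_finset]
      exact Set.ncard_le_ncard_of_injOn f (fun _ h => h) f.injective.injOn
  · push Not at hf
    obtain ⟨f₀, hf₀⟩ := f.exists_castSucc_eq hf
    convert ih hH₀ f₀ hV.le using 1
    ext u v; simp [hf₀]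

theorem TreewidthLE.isSpanningPartialKTree {k : ℕ} {V : Type} [Fintype V] {G : SimpleGraph V}
    (hG : TreewidthLE k G) (hV : k + 1 ≤ Fintype.card V) : IsSpanningPartialKTree k G :=
  let ⟨_, _, hH, f, hf⟩ := hG
  (hH.isSpanningPartialKTree_comap f hV).anti fun u v huv => hf u v huv

theorem IsRootedPartialKTree.induce {k n : ℕ} {H : SimpleGraph (Fin n)} (hH : IsKTree k n H)
    {V : Type} {G : SimpleGraph V} (f : V ↪ Fin n) (hf : ∀ u v, G.Adj u v → H.Adj (f u) (f v))
    (X : Set V) (r : Fin (k + 1) → X) (hr : ∀ i j, i ≠ j → H.Adj (f (r i)) (f (r j))) :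
    IsRootedPartialKTree k (G.induce X) r :=
  ⟨n, H, hH, (Function.Embedding.subtype _).trans f, fun u v h => hf u v h, hr⟩

theorem nonempty_iso_glue_induce {V : Type} {m : ℕ} (G : SimpleGraph V) {X Y : Set V}
    (hcover : ∀ v, v ∈ X ∨ v ∈ Y) (hsep : ∀ u v, G.Adj u v → u ∈ X ∧ v ∈ X ∨ u ∈ Y ∧ v ∈ Y)
    (r₁ : Fin m → X) (r₂ : Fin m → Y) (hr : ∀ i, (r₁ i : V) = r₂ i)
    (hXY : ∀ v ∈ X, v ∈ Y → ∃ i, (r₁ i : V) = v) :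
    Nonempty (G ≃g glue (G.induce X) (G.induce Y) r₁ r₂) := by
  classical
  let φ : V → GlueVerts r₁ r₂ := fun v =>
    if h : v ∈ X then Quot.mk _ (.inl ⟨v, h⟩) else Quot.mk _ (.inr ⟨v, (hcover v).resolve_left h⟩)
  let ψ : GlueVerts r₁ r₂ → V :=
    Quot.lift (Sum.elim Subtype.val Subtype.val) (by rintro _ _ ⟨i, rfl, rfl⟩; exact hr i)
  have hφX (a : X) : φ a = Quot.mk _ (.inl a) := dif_pos a.2
  have hφY (b : Y) : φ b = Quot.mk _ (.inr b) := by
    by_cases hb : (b : V) ∈ X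
    · obtain ⟨i, hi⟩ := hXY b hb b.2
      rw [hφX ⟨b, hb⟩, show (⟨b, hb⟩ : X) = r₁ i from Subtype.ext hi.symm,
        show b = r₂ i from Subtype.ext (hi.symm.trans (hr i))]
      exact Quot.sound ⟨i, rfl, rfl⟩
    · exact dif_neg hb
  have hψφ (v : V) : ψ (φ v) = v := by
    by_cases h : v ∈ X <;> simp [φ, ψ, h]
  have hφψ (x : GlueVerts r₁ r₂) : φ (ψ x) = x := by
    induction x using Quot.ind with
    | mk x => rcases x with a | b; exacts [hφX a, hφY b]
  refine ⟨⟨⟨φ, ψ, hψφ, hφψ⟩, fun {u v} => ⟨?_, fun huv => ?_⟩⟩⟩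
  · rintro ⟨-, a, b, hab, ha, hb⟩
    obtain rfl : ψ (Quot.mk _ a) = u := by rw [ha]; exact hψφ u
    obtain rfl : ψ (Quot.mk _ b) = v := by rw [hb]; exact hψφ v
    rcases a with a | a <;> rcases b with b | b
    exacts [hab, hab.elim, hab.elim, hab]
  refine ⟨fun h => huv.ne (by simpa [hψφ] using congrArg ψ h), ?_⟩
  rcases hsep u v huv with ⟨hu, hv⟩ | ⟨hu, hv⟩
  · exact ⟨.inl ⟨u, hu⟩, .inl ⟨v, hv⟩, huv, (hφX ⟨u, hu⟩).symm, (hφX ⟨v, hv⟩).symm⟩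
  · exact ⟨.inr ⟨u, hu⟩, .inr ⟨v, hv⟩, huv, (hφY ⟨u, hu⟩).symm, (hφY ⟨v, hv⟩).symm⟩

theorem exists_glue_of_separator {k m : ℕ} {H : SimpleGraph (Fin m)} (hH : IsKTree k m H)
    {V : Type} [Fintype V] {G : SimpleGraph V} (f : V ≃ Fin m)
    (hf : ∀ u v, G.Adj u v → H.Adj (f u) (f v)) {A K : Finset (Fin m)}
    (hK : H.IsNClique (k + 1) K) (hAK : Disjoint A K)
    (hsep : ∀ x y, H.Adj x y → x ∈ A → y ∉ A → y ∈ K) :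
    ∃ (V₁ V₂ : Type) (i₁ : Fintype V₁) (G₁ : SimpleGraph V₁) (G₂ : SimpleGraph V₂)
      (r₁ : Fin (k + 1) → V₁) (r₂ : Fin (k + 1) → V₂),
      IsRootedPartialKTree k G₁ r₁ ∧ IsRootedPartialKTree k G₂ r₂ ∧
      Nonempty (G ≃g glue G₁ G₂ r₁ r₂) ∧ @Fintype.card V₁ i₁ = #A + (k + 1) := by
  classical
  let r := K.orderEmbOfFin hK.card_eq
  have hrK (i) : r i ∈ K := K.orderEmbOfFin_mem hK.card_eq i
  let X : Set V := {v | f v ∈ A ∪ K}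
  let Y : Set V := {v | f v ∉ A}
  have hrX (i) : f.symm (r i) ∈ X := by simp [X, hrK]
  have hrY (i) : f.symm (r i) ∈ Y := by simpa [Y] using disjoint_right.1 hAK (hrK i)
  have hroots (i j : Fin (k + 1)) (hij : i ≠ j) :
      H.Adj (f (f.symm (r i))) (f (f.symm (r j))) := by
    simpa using hK.isClique (hrK i) (hrK j) (r.injective.ne hij)
  refine ⟨X, Y, inferInstance, G.induce X, G.induce Y, fun i => ⟨_, hrX i⟩, fun i => ⟨_, hrY i⟩,
    .induce hH f.toEmbedding hf X _ hroots, .induce hH f.toEmbedding hf Y _ hroots,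
    nonempty_iso_glue_induce G (fun v => ?_) (fun u v huv => ?_) _ _ (fun _ => rfl) ?_, ?_⟩
  · by_cases hv : f v ∈ A <;> simp [X, Y, hv]
  · have h₁ := hsep _ _ (hf u v huv)
    have h₂ := hsep _ _ (hf v u huv.symm)
    by_cases hu : f u ∈ A <;> by_cases hv : f v ∈ A <;> simp_all [X, Y]
  · intro v hvX hvY
    simp only [X, Y, Set.mem_ofPred_eq, mem_union] at hvX hvY
    obtain ⟨i, hi⟩ : f v ∈ Set.range r := by
      rw [K.range_orderEmbOfFin]; exact hvX.resolve_left hvY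
    exact ⟨i, by simp [hi]⟩
  · rw [Fintype.card_congr (show X ≃ (A ∪ K : Finset (Fin m)) from f.subtypeEquiv fun _ => Iff.rfl),
      Fintype.card_coe, card_union_of_disjoint hAK, hK.card_eq]

theorem stmt5_general (k N : ℕ) (hkN : k + 1 ≤ N)
    (V : Type) [Fintype V] (G : SimpleGraph V) (hG : TreewidthLE k G)
    (hcard : 3 * N ≤ Fintype.card V) :
    ∃ (V₁ V₂ : Type) (i₁ : Fintype V₁) (G₁ : SimpleGraph V₁) (G₂ : SimpleGraph V₂)
      (r₁ : Fin (k + 1) → V₁) (r₂ : Fin (k + 1) → V₂),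
      IsRootedPartialKTree k G₁ r₁ ∧ IsRootedPartialKTree k G₂ r₂ ∧
      Nonempty (G ≃g glue G₁ G₂ r₁ r₂) ∧
      N + 1 ≤ @Fintype.card V₁ i₁ ∧ @Fintype.card V₁ i₁ ≤ 2 * N := by
  obtain ⟨m, H, hH, f, hf⟩ := hG.isSpanningPartialKTree (by omega)
  have hm : Fintype.card V = m := by simpa using Fintype.card_congr f
  obtain ⟨A, K, hK, hAK, hA₁, hA₂, hsep⟩ :=
    hH.exists_separator (M := N - k) (by omega) (by omega)
  obtain ⟨V₁, V₂, i₁, G₁, G₂, r₁, r₂, h₁, h₂, hiso, hV₁⟩ :=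
    exists_glue_of_separator hH f hf hK hAK hsep
  exact ⟨V₁, V₂, i₁, G₁, G₂, r₁, r₂, h₁, h₂, hiso, by omega, by omega⟩

/-- Let `k` and `N` be positive integers with `N ≥ k + 1`. If `G` is a partial
`k`-tree with at least `3N` vertices, then there exist rooted partial `k`-trees `G₁` and `G₂`
such that `G` is isomorphic to `G₁ ⊕ G₂` and `G₁` has at least `N + 1` and at most `2N`
vertices. -/
theorem stmt5 (k N : ℕ) (hk : 0 < k) (hN : 0 < N) (hkN : k + 1 ≤ N)
    (V : Type) [Fintype V] (G : SimpleGraph V) (hG : TreewidthLE k G)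
    (hcard : 3 * N ≤ Fintype.card V) :
    ∃ (V₁ V₂ : Type) (i₁ : Fintype V₁) (G₁ : SimpleGraph V₁) (G₂ : SimpleGraph V₂)
      (r₁ : Fin (k + 1) → V₁) (r₂ : Fin (k + 1) → V₂),
      IsRootedPartialKTree k G₁ r₁ ∧ IsRootedPartialKTree k G₂ r₂ ∧
      Nonempty (G ≃g glue G₁ G₂ r₁ r₂) ∧
      N + 1 ≤ @Fintype.card V₁ i₁ ∧ @Fintype.card V₁ i₁ ≤ 2 * N :=
  stmt5_general k N hkN V G hG hcard
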